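/- Let n ≥ 1. For 0 ≤ r ≤ n set a_r^{(n)} = C(2n−r+1, 2n−2r+1) + C(2n−r, 2n−2r+1), and for s ≥ 0 set b_s = ((−1)^s/(s+2))·C(2s+2, s+1) (an integer). Define d_{k,ℓ}^{(n)} = Σ_{i=0}^{k} a_i^{(n)}·b_{k+ℓ−i} and the n×n integer matrix V_n = [v_{j,k}] with v_{j,k} = d_{n−j, k−1}^{(n)} for 1 ≤ j,k ≤ n. Let C_n be the companion matrix of θ_n. Then V_n² = 4·E_n + C_n, where E_n is the n×n identity matrix. -/

import Mathlib

/-! With `L m` the Lucas polynomials (`L 0 = 2`, `L 1 = 1`, `L (m + 2) = L (m + 1) + X L m`), the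
coefficients of `L (2n+1)` are the `a_r`, so `θ_n` is the reversal of `L (2n+1)`. Expanding
`L (2n+1) μ ≡ L (2n-1) mod y ^ (2n-1)` shows that `d_{k,0}` are the coefficients of `L (2n-1)` and
that `d_{n,ℓ} = 0` for `ℓ ≤ n - 2`; hence column `k` of `V_n` holds the coordinates of `p_n X ^ k`
in `ℤ[X]/(θ_n)` with respect to `1, X, …, X ^ (n-1)`, where `p_n` is the reversal of `L (2n-1)`.
So `V_n` and `C_n` are the matrices of multiplication by `p_n` and by `X`, and `V_n² = 4 + C_n`
becomes `p_n² ≡ X + 4 mod θ_n`: the reversal of the Cassini-type identity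
`L (2n+1)² - (1 + 2X) L (2n+1) L (2n-1) + X² L (2n-1)² = X ^ (2n-1) (1 + 4X)`. -/

open Finset Matrix

/-- The coefficient `c_k^{(n)} = C(n+k,2k) + 2·C(n+k,2k+1)` of `θ_n`. -/
def thetaCoeff (n k : ℕ) : ℤ := ((n + k).choose (2 * k) : ℤ) + 2 * ((n + k).choose (2 * k + 1) : ℤ)

/-- The companion matrix `C_n` of `θ_n`: 1's on the subdiagonal, last column
`(-c_0^{(n)}, …, -c_{n-1}^{(n)})ᵀ`, and 0's elsewhere. -/
def companionTheta (n : ℕ) : Matrix (Fin n) (Fin n) ℤ :=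
  Matrix.of fun i j =>
    if (j : ℕ) = n - 1 then - thetaCoeff n i
    else if (i : ℕ) = (j : ℕ) + 1 then 1 else 0

/-- `a_r^{(n)} = C(2n−r+1, 2n−2r+1) + C(2n−r, 2n−2r+1)` (for `0 ≤ r ≤ n`). -/
def aR (n r : ℕ) : ℤ :=
  ((2 * n - r + 1).choose (2 * n - 2 * r + 1) : ℤ) + ((2 * n - r).choose (2 * n - 2 * r + 1) : ℤ)

/-- The signed Catalan number `b_s = ((−1)^s/(s+2))·C(2s+2, s+1)` (an integer;
the division is exact). -/
def bCat (s : ℕ) : ℤ := (-1) ^ s * ((((2 * s + 2).choose (s + 1)) / (s + 2) : ℕ) : ℤ)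

/-- `d_{k,ℓ}^{(n)} = Σ_{i=0}^{k} a_i^{(n)}·b_{k+ℓ−i}`. -/
def dKL (n k l : ℕ) : ℤ := ∑ i ∈ Finset.range (k + 1), aR n i * bCat (k + l - i)

/-- The n×n integer matrix `V_n` with (1-based) entries `v_{j,k} = d_{n−j, k−1}^{(n)}`. -/
def Vmat (n : ℕ) : Matrix (Fin n) (Fin n) ℤ :=
  Matrix.of fun j k => dKL n (n - 1 - (j : ℕ)) (k : ℕ)

open Polynomial

namespace AdjoinRoot

variable {R : Type*} [CommRing R] {q : R[X]}

noncomputable def rootBasis (hq : q.Monic) {n : ℕ} (hn : q.natDegree = n) :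
    Module.Basis (Fin n) R (AdjoinRoot q) :=
  (powerBasis' hq).basis.reindex (finCongr hn)

variable (hq : q.Monic) {n : ℕ} (hn : q.natDegree = n)

theorem rootBasis_apply (i : Fin n) : rootBasis hq hn i = root q ^ (i : ℕ) := by
  rw [rootBasis, Module.Basis.reindex_apply, PowerBasis.coe_basis, powerBasis'_gen]
  rfl

theorem rootBasis_repr_mk (f : R[X]) (i : Fin n) :
    (rootBasis hq hn).repr (mk q f) i = (f %ₘ q).coeff i := by
  simp [rootBasis, powerBasis']

variable [Nontrivial R]

theorem rootBasis_repr_mk_of_degree_lt {f : R[X]} (hf : f.degree < n) (i : Fin n) :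
    (rootBasis hq hn).repr (mk q f) i = f.coeff i := by
  rw [rootBasis_repr_mk,
    (modByMonic_eq_self_iff hq).mpr (by rwa [degree_eq_natDegree hq.ne_zero, hn])]

theorem leftMulMatrix_rootBasis_root :
    Algebra.leftMulMatrix (rootBasis hq hn) (root q) =
      Matrix.of fun i j : Fin n =>
        if (j : ℕ) = n - 1 then -q.coeff i else if (i : ℕ) = j + 1 then 1 else 0 := by
  ext i j
  rw [Algebra.leftMulMatrix_eq_repr_mul, rootBasis_apply, ← pow_succ', ← mk_X, ← map_pow,
    Matrix.of_apply]
  split_ifs with hj hij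
  · have hjn : (j : ℕ) + 1 = n := by omega
    have hmk : mk q (X ^ ((j : ℕ) + 1)) = mk q (X ^ n - q) := by
      rw [map_sub, mk_self, sub_zero, hjn]
    have hdeg : (X ^ n - q).degree < (n : WithBot ℕ) := by
      have := degree_sub_lt_left (p := X ^ n) (q := q)
        (by rw [degree_X_pow, degree_eq_natDegree hq.ne_zero, hn])
        (monic_X_pow n).ne_zero (by rw [leadingCoeff_X_pow, hq.leadingCoeff])
      rwa [degree_X_pow] at this
    rw [hmk, rootBasis_repr_mk_of_degree_lt hq hn hdeg, coeff_sub, coeff_X_pow,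
      if_neg (by omega), zero_sub]
  · rw [rootBasis_repr_mk_of_degree_lt hq hn (by rw [degree_X_pow]; exact_mod_cast (by omega)),
      coeff_X_pow, if_pos hij]
  · rw [rootBasis_repr_mk_of_degree_lt hq hn (by rw [degree_X_pow]; exact_mod_cast (by omega)),
      coeff_X_pow, if_neg hij]

end AdjoinRoot

theorem bCat_eq_neg_one_pow_mul_catalan (s : ℕ) :
    bCat s = (-1) ^ s * (catalan (s + 1) : ℤ) := by
  rw [bCat, catalan_eq_centralBinom_div, Nat.centralBinom, Nat.mul_succ]

noncomputable def signedCatalan : PowerSeries ℤ := PowerSeries.mk fun s => (-1) ^ s * catalan s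

theorem coeff_signedCatalan_sq (s : ℕ) :
    PowerSeries.coeff s (signedCatalan ^ 2) = bCat s := by
  rw [pow_two, PowerSeries.coeff_mul, bCat_eq_neg_one_pow_mul_catalan, catalan_succ',
    Nat.cast_sum, Finset.mul_sum]
  refine Finset.sum_congr rfl fun p hp => ?_
  rw [HasAntidiagonal.mem_antidiagonal] at hp
  simp only [signedCatalan, PowerSeries.coeff_mk, Nat.cast_mul, ← hp, pow_add]
  ring

theorem X_mul_signedCatalan_sq_add : PowerSeries.X * signedCatalan ^ 2 + signedCatalan = 1 := by
  ext (_ | s)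
  · simp [signedCatalan]
  · rw [map_add, PowerSeries.coeff_succ_X_mul, coeff_signedCatalan_sq,
      bCat_eq_neg_one_pow_mul_catalan, PowerSeries.coeff_one, if_neg s.succ_ne_zero,
      signedCatalan, PowerSeries.coeff_mk, pow_succ]
    ring

noncomputable def fibPoly : ℕ → ℤ[X]
  | 0 => 1
  | 1 => 1
  | m + 2 => fibPoly (m + 1) + X * fibPoly m

noncomputable def lucasPoly : ℕ → ℤ[X]
  | 0 => 2
  | 1 => 1
  | m + 2 => lucasPoly (m + 1) + X * lucasPoly m

theorem fibPoly_add_two (m : ℕ) : fibPoly (m + 2) = fibPoly (m + 1) + X * fibPoly m := rfl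

theorem lucasPoly_add_two (m : ℕ) : lucasPoly (m + 2) = lucasPoly (m + 1) + X * lucasPoly m := rfl

theorem coeff_fibPoly (m k : ℕ) : (fibPoly m).coeff k = (m - k).choose k := by
  induction m using Nat.twoStepInduction generalizing k with
  | zero => rcases k with _ | k <;> simp [fibPoly, coeff_one]
  | one => rcases k with _ | _ | k <;> simp [fibPoly, coeff_one]
  | more m ih0 ih1 =>
    rcases k with _ | k
    · simp [fibPoly_add_two, ih1]
    · rw [fibPoly_add_two, coeff_add, coeff_X_mul, ih0, ih1]
      rcases Nat.lt_or_ge k (m + 1) with h | h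
      · rw [show m + 2 - (k + 1) = m - k + 1 by omega, show m + 1 - (k + 1) = m - k by omega,
          Nat.choose_succ_succ', Nat.cast_add, add_comm]
      · rw [Nat.choose_eq_zero_of_lt (show m + 2 - (k + 1) < k + 1 by omega),
          Nat.choose_eq_zero_of_lt (show m + 1 - (k + 1) < k + 1 by omega),
          Nat.choose_eq_zero_of_lt (show m - k < k by omega)]
        simp

theorem lucasPoly_add_two_eq_fibPoly (m : ℕ) : lucasPoly (m + 2) = fibPoly (m + 2) + X * fibPoly m := by
  induction m using Nat.twoStepInduction with
  | zero => simp [lucasPoly, fibPoly]; ring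
  | one => simp [lucasPoly, fibPoly]; ring
  | more m ih0 ih1 =>
    rw [lucasPoly_add_two, ih1, ih0, fibPoly_add_two (m + 2), fibPoly_add_two (m + 1),
      fibPoly_add_two m]
    ring

theorem coeff_lucasPoly_eq_zero {m k : ℕ} (h : m < 2 * k) : (lucasPoly m).coeff k = 0 := by
  obtain ⟨k, rfl⟩ : ∃ k', k = k' + 1 := ⟨k - 1, by omega⟩
  rcases m with _ | _ | m
  · rw [lucasPoly, ← map_ofNat C 2, coeff_C, if_neg k.succ_ne_zero]
  · simp [lucasPoly, coeff_one]
  · rw [lucasPoly_add_two_eq_fibPoly, coeff_add, coeff_X_mul, coeff_fibPoly, coeff_fibPoly,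
      Nat.choose_eq_zero_of_lt (by omega), Nat.choose_eq_zero_of_lt (by omega)]
    simp

theorem natDegree_lucasPoly_le (m : ℕ) : (lucasPoly m).natDegree ≤ m / 2 :=
  natDegree_le_iff_coeff_eq_zero.mpr fun _ hk => coeff_lucasPoly_eq_zero (by omega)

theorem coeff_lucasPoly_two_mul_add_one {n r : ℕ} (hr : r ≤ n) :
    (lucasPoly (2 * n + 1)).coeff r = aR n r := by
  rcases n with _ | n
  · obtain rfl : r = 0 := by omega
    simp [lucasPoly, aR]
  rw [show 2 * (n + 1) + 1 = 2 * n + 1 + 2 by ring, lucasPoly_add_two_eq_fibPoly, coeff_add,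
    coeff_fibPoly, aR, show 2 * n + 1 + 2 - r = 2 * (n + 1) - r + 1 by omega,
    Nat.choose_symm_of_eq_add (show 2 * (n + 1) - r + 1 = 2 * (n + 1) - 2 * r + 1 + r by omega)]
  congr 1
  rcases r with _ | s
  · simp
  · rw [coeff_X_mul, coeff_fibPoly, show 2 * n + 1 - s = 2 * (n + 1) - (s + 1) by omega,
      Nat.choose_symm_of_eq_add
        (show 2 * (n + 1) - (s + 1) = 2 * (n + 1) - 2 * (s + 1) + 1 + s by omega)]

theorem lucasPoly_cassini (m : ℕ) :
    lucasPoly (m + 1) ^ 2 - lucasPoly (m + 1) * lucasPoly m - X * lucasPoly m ^ 2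
      = -(-X) ^ m * (1 + 4 * X) := by
  induction m with
  | zero => simp [lucasPoly]; ring
  | succ m ih =>
    rw [lucasPoly_add_two]
    linear_combination (-X) * ih

theorem coe_lucasPoly_add_two (m : ℕ) : (lucasPoly (m + 2) : PowerSeries ℤ)
    = (lucasPoly (m + 1) : PowerSeries ℤ) + PowerSeries.X * (lucasPoly m : PowerSeries ℤ) := by
  rw [lucasPoly_add_two, Polynomial.coe_add, Polynomial.coe_mul, Polynomial.coe_X]

/-- The roots of `T ^ 2 - T - X` are `α = 1 / signedCatalan` and `β = -X * signedCatalan`, and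
`lucasPoly m = α ^ m + β ^ m`; the identity reads
`L (m + 2) / α ^ 2 - L m = β ^ m ((β / α) ^ 2 - 1)`. -/
theorem coe_lucasPoly_mul_signedCatalan_sq_sub (m : ℕ) :
    (lucasPoly (m + 2) : PowerSeries ℤ) * signedCatalan ^ 2 - (lucasPoly m : PowerSeries ℤ)
      = (-PowerSeries.X * signedCatalan) ^ m * (PowerSeries.X ^ 2 * signedCatalan ^ 4 - 1) := by
  have hc := X_mul_signedCatalan_sq_add
  have h2 : ((2 : ℤ[X]) : PowerSeries ℤ) = 2 := by
    rw [← map_ofNat C 2, Polynomial.coe_C, map_ofNat]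
  induction m using Nat.twoStepInduction with
  | zero =>
    rw [coe_lucasPoly_add_two]
    simp only [lucasPoly, Polynomial.coe_one, h2]
    linear_combination (1 + signedCatalan - PowerSeries.X * signedCatalan ^ 2) * hc
  | one =>
    rw [coe_lucasPoly_add_two, coe_lucasPoly_add_two]
    simp only [lucasPoly, Polynomial.coe_one, h2]
    linear_combination (PowerSeries.X ^ 2 * signedCatalan ^ 3 - PowerSeries.X * signedCatalan ^ 2
      + (1 + PowerSeries.X) * signedCatalan + 1) * hc
  | more m ih0 ih1 =>
    linear_combination ih1 + PowerSeries.X * ih0 + signedCatalan ^ 2 * coe_lucasPoly_add_two (m + 2)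
      - coe_lucasPoly_add_two m
      - (-PowerSeries.X * signedCatalan) ^ m * (PowerSeries.X ^ 2 * signedCatalan ^ 4 - 1)
        * PowerSeries.X * hc

theorem sum_coeff_lucasPoly_mul_bCat {m j : ℕ} (hj : j < m) :
    ∑ i ∈ range (j + 1), (lucasPoly (m + 2)).coeff i * bCat (j - i)
      = (lucasPoly m).coeff j := by
  have h := congrArg (PowerSeries.coeff j) (coe_lucasPoly_mul_signedCatalan_sq_sub m)
  rw [show ∀ c γ : PowerSeries ℤ,
      (-PowerSeries.X * c) ^ m * γ = PowerSeries.X ^ m * ((-c) ^ m * γ) by intros; ring,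
    PowerSeries.coeff_X_pow_mul', if_neg (by omega), map_sub,
    sub_eq_zero, PowerSeries.coeff_mul, Nat.sum_antidiagonal_eq_sum_range_succ
      (fun a b => PowerSeries.coeff a _ * PowerSeries.coeff b _)] at h
  simpa only [Polynomial.coeff_coe, coeff_signedCatalan_sq] using h

theorem aR_zero (n : ℕ) : aR n 0 = 1 := by
  simp [aR]

theorem aR_sub {n j : ℕ} (hj : j ≤ n) : aR n (n - j) = thetaCoeff n j := by
  rw [aR, thetaCoeff, show 2 * n - (n - j) = n + j by omega,
    show 2 * n - 2 * (n - j) + 1 = 2 * j + 1 by omega, Nat.choose_succ_succ, Nat.cast_add]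
  ring

theorem dKL_succ_left (n k l : ℕ) :
    dKL n (k + 1) l = dKL n k (l + 1) + aR n (k + 1) * bCat l := by
  rw [dKL, dKL, Finset.sum_range_succ, Nat.add_sub_cancel_left]
  congr 1
  exact Finset.sum_congr rfl fun i _ => by rw [show k + 1 + l - i = k + (l + 1) - i by omega]

theorem dKL_zero_left (n l : ℕ) : dKL n 0 l = bCat l := by
  simp [dKL, aR_zero]

theorem dKL_zero_right {n j : ℕ} (hj : j < n) : dKL n j 0 = (lucasPoly (2 * n - 1)).coeff j := by
  rw [← sum_coeff_lucasPoly_mul_bCat (by omega), show 2 * n - 1 + 2 = 2 * n + 1 by omega, dKL]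
  refine Finset.sum_congr rfl fun i hi => ?_
  rw [coeff_lucasPoly_two_mul_add_one (by simp at hi; omega), add_zero]

theorem dKL_self {n l : ℕ} (hl : l + 2 ≤ n) : dKL n n l = 0 := by
  rw [← coeff_lucasPoly_eq_zero (m := 2 * n - 1) (k := n + l) (by omega),
    ← sum_coeff_lucasPoly_mul_bCat (by omega), show 2 * n - 1 + 2 = 2 * n + 1 by omega, dKL]
  calc ∑ i ∈ range (n + 1), aR n i * bCat (n + l - i)
      = ∑ i ∈ range (n + 1), (lucasPoly (2 * n + 1)).coeff i * bCat (n + l - i) :=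
        Finset.sum_congr rfl fun i hi => by
          rw [coeff_lucasPoly_two_mul_add_one (by simp at hi; omega)]
    _ = _ := Finset.sum_subset (Finset.range_mono (by omega)) fun i _ hi => by
          rw [coeff_lucasPoly_eq_zero (by simp at hi; omega), zero_mul]

theorem thetaCoeff_self (n : ℕ) : thetaCoeff n n = 1 := by
  simp [thetaCoeff, ← two_mul]

/-- `θ_n(z) = z ^ n L_{2n+1}(1/z)`, see `coeff_thetaPoly`. -/
noncomputable def thetaPoly (n : ℕ) : ℤ[X] := reflect n (lucasPoly (2 * n + 1))

theorem coeff_thetaPoly {n j : ℕ} (hj : j ≤ n) : (thetaPoly n).coeff j = thetaCoeff n j := by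
  rw [thetaPoly, coeff_reflect, revAt_le hj, coeff_lucasPoly_two_mul_add_one (by omega), aR_sub hj]

theorem coeff_thetaPoly_of_lt {n j : ℕ} (hj : n < j) : (thetaPoly n).coeff j = 0 := by
  rw [thetaPoly, coeff_reflect, revAt_eq_self_of_lt hj, coeff_lucasPoly_eq_zero (by omega)]

theorem natDegree_thetaPoly_le (n : ℕ) : (thetaPoly n).natDegree ≤ n :=
  natDegree_le_iff_coeff_eq_zero.mpr fun _ hj => coeff_thetaPoly_of_lt (by exact_mod_cast hj)

theorem thetaPoly_monic (n : ℕ) : (thetaPoly n).Monic :=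
  monic_of_natDegree_le_of_coeff_eq_one n (natDegree_thetaPoly_le n)
    (by rw [coeff_thetaPoly le_rfl, thetaCoeff_self])

theorem natDegree_thetaPoly (n : ℕ) : (thetaPoly n).natDegree = n :=
  natDegree_eq_of_le_of_coeff_ne_zero (natDegree_thetaPoly_le n)
    (by rw [coeff_thetaPoly le_rfl, thetaCoeff_self]; exact one_ne_zero)

noncomputable def columnPoly (n k : ℕ) : ℤ[X] :=
  ∑ j ∈ range n, C (dKL n (n - 1 - j) k) * X ^ j

theorem coeff_columnPoly (n k i : ℕ) :
    (columnPoly n k).coeff i = if i < n then dKL n (n - 1 - i) k else 0 := by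
  simp [columnPoly]

theorem degree_columnPoly_lt (n k : ℕ) : (columnPoly n k).degree < n :=
  degree_lt_iff_coeff_zero _ _ |>.mpr fun i hi => by
    rw [coeff_columnPoly, if_neg (by omega)]

theorem X_mul_columnPoly {n k : ℕ} (hk : k + 2 ≤ n) :
    X * columnPoly n k = columnPoly n (k + 1) + C (bCat k) * thetaPoly n := by
  ext (_ | i)
  · have hlast := dKL_succ_left n (n - 1) k
    rw [Nat.sub_add_cancel (by omega), dKL_self hk, 
      show aR n n = thetaCoeff n 0 by simpa using aR_sub (Nat.zero_le n)] at hlast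
    rw [coeff_X_mul_zero, coeff_add, coeff_columnPoly, if_pos (by omega), coeff_C_mul,
      coeff_thetaPoly (Nat.zero_le n), Nat.sub_zero]
    linear_combination hlast
  · rw [coeff_X_mul, coeff_add, coeff_columnPoly, coeff_columnPoly, coeff_C_mul]
    rcases lt_trichotomy (i + 1) n with hi | hi | hi
    · rw [if_pos (by omega), if_pos hi, coeff_thetaPoly hi.le, ← aR_sub hi.le,
        show n - 1 - i = n - 1 - (i + 1) + 1 by omega, dKL_succ_left,
        show n - 1 - (i + 1) + 1 = n - (i + 1) by omega]
      ring
    · rw [if_pos (by omega), if_neg (by omega), coeff_thetaPoly hi.le, hi, thetaCoeff_self,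
        show n - 1 - i = 0 by omega, dKL_zero_left]
      ring
    · rw [if_neg (by omega), if_neg (by omega), coeff_thetaPoly_of_lt hi]
      ring

theorem columnPoly_zero {n : ℕ} (hn : 1 ≤ n) :
    columnPoly n 0 = reflect (n - 1) (lucasPoly (2 * n - 1)) := by
  ext i
  rw [coeff_columnPoly, coeff_reflect]
  split_ifs with hi
  · rw [revAt_le (by omega), dKL_zero_right (by omega)]
  · rw [revAt_eq_self_of_lt (by omega), coeff_lucasPoly_eq_zero (by omega)]

theorem X_sq_mul_lucasPoly_sq (m : ℕ) :
    X ^ 2 * lucasPoly (2 * m + 1) ^ 2 = lucasPoly (2 * m + 3) *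
      ((1 + 2 * X) * lucasPoly (2 * m + 1) - lucasPoly (2 * m + 3))
        + X ^ (2 * m + 1) + 4 * X ^ (2 * m + 2) := by
  have h := lucasPoly_cassini (2 * m + 1)
  rw [Odd.neg_pow ⟨m, rfl⟩] at h
  rw [show 2 * m + 3 = 2 * m + 1 + 2 by ring, lucasPoly_add_two]
  linear_combination h

theorem thetaPoly_dvd_columnPoly_sq_sub {n : ℕ} (hn : 1 ≤ n) :
    thetaPoly n ∣ columnPoly n 0 ^ 2 - (X + 4) := by
  obtain ⟨m, rfl⟩ : ∃ m, n = m + 1 := ⟨n - 1, by omega⟩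
  rw [columnPoly_zero hn, thetaPoly, show 2 * (m + 1) - 1 = 2 * m + 1 by omega,
    Nat.add_sub_cancel, show 2 * (m + 1) + 1 = 2 * m + 3 by omega]
  have h := congrArg (reflect (2 * m + 2)) (X_sq_mul_lucasPoly_sq m)
  set v := lucasPoly (2 * m + 1)
  set w := lucasPoly (2 * m + 3)
  set Q := (1 + 2 * X) * v - w
  have hv : v.natDegree ≤ m := (natDegree_lucasPoly_le _).trans (by omega)
  have hw : w.natDegree ≤ m + 1 := (natDegree_lucasPoly_le _).trans (by omega)
  have hQ : Q.natDegree ≤ m + 1 := by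
    refine (natDegree_sub_le _ _).trans (max_le (natDegree_mul_le.trans ?_) hw)
    have : (1 + 2 * X : ℤ[X]).natDegree ≤ 1 := by compute_degree
    omega
  have hL : reflect (2 * m + 2) (X ^ 2 * v ^ 2) = reflect m v ^ 2 := by
    rw [show 2 * m + 2 = 2 + (m + m) by ring, sq v,
      reflect_mul _ _ (natDegree_X_pow_le 2) (natDegree_mul_le.trans (by omega)),
      reflect_mul _ _ hv hv, reflect_monomial, revAt_le le_rfl, Nat.sub_self, pow_zero, one_mul, sq]
  have hR : reflect (2 * m + 2) (w * Q + X ^ (2 * m + 1) + 4 * X ^ (2 * m + 2))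
      = reflect (m + 1) w * reflect (m + 1) Q + X + 4 := by
    rw [reflect_add, reflect_add, show 2 * m + 2 = m + 1 + (m + 1) by ring, reflect_mul _ _ hw hQ,
      reflect_monomial, ← map_ofNat C 4, reflect_C_mul_X_pow, revAt_le (by omega),
      revAt_le le_rfl, Nat.sub_self, show m + 1 + (m + 1) - (2 * m + 1) = 1 by omega, pow_one,
      pow_zero, mul_one, map_ofNat]
  rw [hL, hR] at h
  exact ⟨reflect (m + 1) Q, by linear_combination h⟩

noncomputable abbrev thetaBasis (n : ℕ) : Module.Basis (Fin n) ℤ (AdjoinRoot (thetaPoly n)) :=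
  AdjoinRoot.rootBasis (thetaPoly_monic n) (natDegree_thetaPoly n)

theorem companionTheta_eq_leftMulMatrix (n : ℕ) :
    companionTheta n = Algebra.leftMulMatrix (thetaBasis n) (AdjoinRoot.root (thetaPoly n)) := by
  rw [AdjoinRoot.leftMulMatrix_rootBasis_root]
  ext i j
  simp only [companionTheta, Matrix.of_apply, coeff_thetaPoly i.isLt.le]

theorem mk_columnPoly {n k : ℕ} (hk : k < n) :
    AdjoinRoot.mk (thetaPoly n) (columnPoly n k)
      = AdjoinRoot.mk (thetaPoly n) (columnPoly n 0) * AdjoinRoot.root (thetaPoly n) ^ k := by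
  induction k with
  | zero => rw [pow_zero, mul_one]
  | succ k ih =>
    rw [eq_sub_of_add_eq (X_mul_columnPoly (by omega)).symm, map_sub, map_mul, map_mul,
      AdjoinRoot.mk_X, AdjoinRoot.mk_self, mul_zero, sub_zero, ih (by omega), pow_succ]
    ring

theorem Vmat_eq_leftMulMatrix (n : ℕ) :
    Vmat n
      = Algebra.leftMulMatrix (thetaBasis n) (AdjoinRoot.mk (thetaPoly n) (columnPoly n 0)) := by
  ext i k
  rw [Algebra.leftMulMatrix_eq_repr_mul, AdjoinRoot.rootBasis_apply, ← mk_columnPoly k.isLt,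
    AdjoinRoot.rootBasis_repr_mk_of_degree_lt _ _ (degree_columnPoly_lt n k), coeff_columnPoly,
    if_pos i.isLt, Vmat, Matrix.of_apply]

theorem stmt_11 (n : ℕ) (hn : 1 ≤ n) :
    (Vmat n) ^ 2 = (4 : ℤ) • (1 : Matrix (Fin n) (Fin n) ℤ) + companionTheta n := by
  have hsq :
      AdjoinRoot.mk (thetaPoly n) (columnPoly n 0) ^ 2 = AdjoinRoot.root (thetaPoly n) + 4 := by
    rw [← map_pow, AdjoinRoot.mk_eq_mk.mpr (thetaPoly_dvd_columnPoly_sq_sub hn), map_add,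
      AdjoinRoot.mk_X, map_ofNat]
  rw [Vmat_eq_leftMulMatrix, ← map_pow, hsq, map_add, ← companionTheta_eq_leftMulMatrix,
    add_comm, map_ofNat, zsmul_eq_mul, mul_one, Int.cast_ofNat]
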